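/- For each real s, the 9-dimensional Lie algebra n_s (with the relations of Definition 3.3) is three-step nilpotent of type (3,3,3): dim(n_s/n_s^(2)) = 3, dim(n_s^(2)/n_s^(3)) = 3, dim(n_s^(3)) = 3, and n_s^(4) = 0. -/

import Mathlib

open Real in
/-- Brackets of basis vectors `[xᵢ, xⱼ]` (for `i < j`) of the 9-dimensional
Lie algebra `n_s`, with `x₁,…,x₉` identified with `Pi.single 0 1, …, Pi.single 8 1`. -/
noncomputable def sc9 (s : ℝ) (i j : Fin 9) : Fin 9 → ℝ :=
  if i = 1 ∧ j = 2 then exp (4*s) • (Pi.single 3 1 : Fin 9 → ℝ)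
  else if i = 0 ∧ j = 2 then exp (-3*s) • (Pi.single 4 1 : Fin 9 → ℝ)
  else if i = 0 ∧ j = 1 then exp (-s) • (Pi.single 5 1 : Fin 9 → ℝ)
  else if i = 1 ∧ j = 5 then exp (-4*s) • (Pi.single 6 1 : Fin 9 → ℝ)
  else if i = 2 ∧ j = 3 then exp (4*s) • (Pi.single 6 1 : Fin 9 → ℝ)
  else if i = 0 ∧ j = 5 then exp (4*s) • (Pi.single 7 1 : Fin 9 → ℝ)
  else if i = 1 ∧ j = 3 then (Pi.single 7 1 : Fin 9 → ℝ)
  else if i = 2 ∧ j = 4 then exp (-4*s) • (Pi.single 7 1 : Fin 9 → ℝ)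
  else if i = 2 ∧ j = 5 then exp (-s) • (Pi.single 8 1 : Fin 9 → ℝ)
  else if i = 1 ∧ j = 4 then exp s • (Pi.single 8 1 : Fin 9 → ℝ)
  else 0

/-- Skew-symmetrized structure constants. -/
noncomputable def bb9 (s : ℝ) (i j : Fin 9) : Fin 9 → ℝ := sc9 s i j - sc9 s j i

/-- The skew-symmetric bilinear extension of the bracket relations of `n_s`. -/
noncomputable def bracket9 (s : ℝ) (u v : Fin 9 → ℝ) : Fin 9 → ℝ :=
  ∑ i : Fin 9, ∑ j : Fin 9, (u i * v j) • bb9 s i j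

/-- The lower central series of the 9-dimensional `n_s`: `lcs9 s 0 = n_s⁽¹⁾ = n_s`,
`lcs9 s n = n_s⁽ⁿ⁺¹⁾`. -/
noncomputable def lcs9 (s : ℝ) : ℕ → Submodule ℝ (Fin 9 → ℝ)
  | 0 => ⊤
  | n + 1 => Submodule.span ℝ
      {z : Fin 9 → ℝ | ∃ u : Fin 9 → ℝ, ∃ v ∈ lcs9 s n, z = bracket9 s u v}

/-!
Grade `n_s` by giving `x₁, x₂, x₃` degree 1, `x₄, x₅, x₆` degree 2 and `x₇, x₈, x₉` degree 3;
the bracket adds degrees, so `n_s⁽ᵏ⁺¹⁾` lies in the span of the basis vectors of degree `> k`,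
i.e. in the subspace of vectors vanishing on the first `3k` coordinates. Conversely every basis
vector of degree `d ≥ 2` is a nonzero multiple of the bracket of some basis vector with one
of degree `≥ d - 1`, so by induction this subspace equals `n_s⁽ᵏ⁺¹⁾`, and the dimensions can
be read off.
-/

open Module Submodule

section CoordTail

variable (R : Type*) [Semiring R] (n : ℕ)

def coordTail (k : ℕ) : Submodule R (Fin n → R) :=
  ⨅ i ∈ {i : Fin n | (i : ℕ) < k}, LinearMap.ker (LinearMap.proj i)

variable {R n}

theorem mem_coordTail {k : ℕ} {v : Fin n → R} :
    v ∈ coordTail R n k ↔ ∀ i : Fin n, (i : ℕ) < k → v i = 0 := by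
  simp [coordTail]

theorem single_mem_coordTail {k : ℕ} {i : Fin n} (hi : k ≤ i) (c : R) :
    Pi.single i c ∈ coordTail R n k :=
  mem_coordTail.2 fun j hj => Pi.single_eq_of_ne (Fin.ne_of_val_ne (by omega : (j : ℕ) ≠ i)) _

theorem coordTail_antitone : Antitone (coordTail R n) := fun _ _ hkl _ hv =>
  mem_coordTail.2 fun i hi => mem_coordTail.1 hv i (by omega)

theorem coordTail_eq_bot {k : ℕ} (hk : n ≤ k) : coordTail R n k = ⊥ :=
  eq_bot_iff.2 fun v hv => (mem_bot R).2 <| funext fun i => mem_coordTail.1 hv i (by omega)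

theorem coordTail_le_of_single_mem {k : ℕ} {W : Submodule R (Fin n → R)}
    (h : ∀ i : Fin n, k ≤ i → Pi.single i 1 ∈ W) : coordTail R n k ≤ W := by
  intro v hv
  rw [pi_eq_sum_univ' v]
  refine sum_mem fun i _ => ?_
  by_cases hi : k ≤ i
  · exact W.smul_mem _ (h i hi)
  · rw [mem_coordTail.1 hv i (by omega), zero_smul]
    exact W.zero_mem

end CoordTail

theorem finrank_coordTail {R : Type*} [Ring R] [StrongRankCondition R] {n : ℕ} (k : ℕ) :
    finrank R (coordTail R n k) = n - k := by
  have e := LinearMap.iInfKerProjEquiv R (fun _ : Fin n => R) (I := {i | k ≤ (i : ℕ)})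
    (J := {i | (i : ℕ) < k}) (Set.disjoint_left.2 fun i h h' => by simp_all; omega)
    (fun i _ => by simp; omega)
  rw [coordTail, e.finrank_eq, finrank_fintype_fun_eq_card, Fintype.card_subtype]
  have h := Finset.card_filter_add_card_filter_not (s := .univ) fun i : Fin n => (i : ℕ) < k
  simp only [not_lt, Finset.card_univ, Fintype.card_fin, Fin.card_filter_val_lt] at h
  simp only [Set.mem_ofPred_eq]
  omega

theorem bracket9_single_single (s : ℝ) (i j : Fin 9) :
    bracket9 s (Pi.single i 1) (Pi.single j 1) = bb9 s i j := by
  simp [bracket9, Pi.single_apply, ite_smul, Finset.sum_ite_eq']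

-- `xᵢ₊₁` has degree `i / 3 + 1`, and the vectors of degree `≥ d` form `coordTail ℝ 9 (3 * (d - 1))`.
theorem bb9_mem_coordTail (s : ℝ) (i j : Fin 9) :
    bb9 s i j ∈ coordTail ℝ 9 (3 * ((i : ℕ) / 3 + (j : ℕ) / 3 + 1)) := by
  fin_cases i <;> fin_cases j <;> simp [bb9, sc9, ← Pi.single_smul, single_mem_coordTail]

theorem bracket9_mem_coordTail (s : ℝ) (u : Fin 9 → ℝ) {v : Fin 9 → ℝ} {k : ℕ}
    (hv : v ∈ coordTail ℝ 9 (3 * k)) : bracket9 s u v ∈ coordTail ℝ 9 (3 * (k + 1)) := by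
  refine sum_mem fun i _ => sum_mem fun j _ => ?_
  by_cases hj : 3 * k ≤ j
  · exact smul_mem _ _ (coordTail_antitone (by omega) (bb9_mem_coordTail s i j))
  · rw [mem_coordTail.1 hv j (by omega), mul_zero, zero_smul]
    exact zero_mem _

theorem lcs9_le_coordTail (s : ℝ) (k : ℕ) : lcs9 s k ≤ coordTail ℝ 9 (3 * k) := by
  induction k with
  | zero => simp [lcs9, coordTail]
  | succ k ih =>
    refine span_le.2 ?_
    rintro _ ⟨u, v, hv, rfl⟩
    exact bracket9_mem_coordTail s u (ih hv)

theorem exists_bb9_eq_smul_single (s : ℝ) (m : Fin 9) (hm : 3 ≤ (m : ℕ)) :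
    ∃ i j : Fin 9, (m : ℕ) / 3 ≤ (j : ℕ) / 3 + 1 ∧
      ∃ c : ℝ, c ≠ 0 ∧ bb9 s i j = c • Pi.single m 1 := by
  fin_cases m
  iterate 3 exact absurd hm (by decide)
  · exact ⟨1, 2, by decide, _, Real.exp_ne_zero (4 * s), by simp [bb9, sc9]⟩
  · exact ⟨0, 2, by decide, _, Real.exp_ne_zero (-3 * s), by simp [bb9, sc9]⟩
  · exact ⟨0, 1, by decide, _, Real.exp_ne_zero (-s), by simp [bb9, sc9]⟩
  · exact ⟨1, 5, by decide, _, Real.exp_ne_zero (-4 * s), by simp [bb9, sc9]⟩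
  · exact ⟨1, 3, by decide, 1, one_ne_zero, by simp [bb9, sc9]⟩
  · exact ⟨2, 5, by decide, _, Real.exp_ne_zero (-s), by simp [bb9, sc9]⟩

theorem single_mem_lcs9_succ {s : ℝ} {k : ℕ} {i j m : Fin 9} {c : ℝ}
    (hj : Pi.single j 1 ∈ lcs9 s k) (hc : c ≠ 0) (h : bb9 s i j = c • Pi.single m 1) :
    Pi.single m 1 ∈ lcs9 s (k + 1) := by
  have : c⁻¹ • bb9 s i j ∈ lcs9 s (k + 1) :=
    smul_mem _ _ (subset_span ⟨_, _, hj, (bracket9_single_single s i j).symm⟩)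
  rwa [h, smul_smul, inv_mul_cancel₀ hc, one_smul] at this

theorem coordTail_le_lcs9 (s : ℝ) (k : ℕ) : coordTail ℝ 9 (3 * k) ≤ lcs9 s k := by
  induction k with
  | zero => exact le_top
  | succ k ih =>
    refine coordTail_le_of_single_mem fun m hm => ?_
    obtain ⟨i, j, hjm, c, hc, h⟩ := exists_bb9_eq_smul_single s m (by omega)
    exact single_mem_lcs9_succ (ih (single_mem_coordTail (by omega) 1)) hc h

theorem lcs9_eq_coordTail (s : ℝ) (k : ℕ) : lcs9 s k = coordTail ℝ 9 (3 * k) :=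
  (lcs9_le_coordTail s k).antisymm (coordTail_le_lcs9 s k)

/-- For each real `s`, the 9-dimensional `n_s` is three-step nilpotent of type
`(3,3,3)`: `dim(n_s/n_s⁽²⁾) = 3`, `dim(n_s⁽²⁾/n_s⁽³⁾) = 3`, `dim n_s⁽³⁾ = 3`,
and `n_s⁽⁴⁾ = 0`. -/
theorem stmt8 (s : ℝ) :
    Module.finrank ℝ ((Fin 9 → ℝ) ⧸ lcs9 s 1) = 3 ∧
    Module.finrank ℝ (↥(lcs9 s 1) ⧸ (lcs9 s 2).comap (lcs9 s 1).subtype) = 3 ∧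
    Module.finrank ℝ ↥(lcs9 s 2) = 3 ∧
    lcs9 s 3 = ⊥ := by
  have h1 : lcs9 s 1 = coordTail ℝ 9 3 := lcs9_eq_coordTail s 1
  have h2 : lcs9 s 2 = coordTail ℝ 9 6 := lcs9_eq_coordTail s 2
  have h3 : lcs9 s 3 = coordTail ℝ 9 9 := lcs9_eq_coordTail s 3
  rw [h1, h2, h3]
  have f1 : finrank ℝ (coordTail ℝ 9 3) = 6 := finrank_coordTail 3
  have f2 : finrank ℝ (coordTail ℝ 9 6) = 3 := finrank_coordTail 6
  refine ⟨?_, ?_, f2, coordTail_eq_bot (R := ℝ) le_rfl⟩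
  · have := (coordTail ℝ 9 3).finrank_quotient_add_finrank
    simp only [finrank_fin_fun] at this
    omega
  · have hle : coordTail ℝ 9 6 ≤ coordTail ℝ 9 3 := coordTail_antitone (by norm_num)
    have hcomap := (comapSubtypeEquivOfLe hle).finrank_eq
    have := ((coordTail ℝ 9 6).comap (coordTail ℝ 9 3).subtype).finrank_quotient_add_finrank
    omega
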